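/- For every bounded open convex set Ω ⊂ ℝ² containing 0, the Minkowski-dimension-type parameter κ_Ω = limsup_{δ→0} log N(Ω, δ) / log(δ^{−1}) satisfies 0 ≤ κ_Ω ≤ 1/2, where N(Ω, δ) is the minimal number of caps B(p, ℓ, δ) = {x ∈ ∂Ω : dist(x, ℓ) < δ} (over boundary points p with supporting line ℓ at p) needed to cover ∂Ω. -/

import Mathlib

open Set
open scoped RealInnerProductSpace

noncomputable section

/-- `n` is an outward unit normal of a supporting line of `Ω` at the boundary point `p`. -/
def IsSupportingNormal (Ω : Set (EuclideanSpace ℝ (Fin 2)))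
    (p n : EuclideanSpace ℝ (Fin 2)) : Prop :=
  p ∈ frontier Ω ∧ ‖n‖ = 1 ∧ ∀ y ∈ Ω, ⟪y, n⟫ ≤ ⟪p, n⟫

/-- The cap `B(p, ℓ, δ) = {x ∈ ∂Ω : dist(x, ℓ) < δ}`, where `ℓ` is the supporting line through
`p` with unit normal `n`. -/
def bdryCap (Ω : Set (EuclideanSpace ℝ (Fin 2)))
    (p n : EuclideanSpace ℝ (Fin 2)) (δ : ℝ) : Set (EuclideanSpace ℝ (Fin 2)) :=
  {x ∈ frontier Ω | |⟪x - p, n⟫| < δ}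

/-- `N(Ω, δ)`: the minimal number of caps of width `δ` needed to cover `∂Ω`. -/
def capCoverNumber (Ω : Set (EuclideanSpace ℝ (Fin 2))) (δ : ℝ) : ℕ :=
  sInf {k : ℕ | ∃ s : Finset (EuclideanSpace ℝ (Fin 2) × EuclideanSpace ℝ (Fin 2)),
    s.card = k ∧ (∀ q ∈ s, IsSupportingNormal Ω q.1 q.2) ∧
    frontier Ω ⊆ ⋃ q ∈ s, bdryCap Ω q.1 q.2 δ}

/-- `κ_Ω = limsup_{δ→0⁺} log N(Ω, δ) / log δ⁻¹`. -/
def kappa (Ω : Set (EuclideanSpace ℝ (Fin 2))) : ℝ :=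
  Filter.limsup (fun δ : ℝ => Real.log (capCoverNumber Ω δ) / Real.log δ⁻¹)
    (nhdsWithin 0 (Ioi 0))

/-!
Take a maximal family of boundary points with supporting normals `(pᵢ, nᵢ)` such that for any two
members `⟪pᵢ - pⱼ, nᵢ - nⱼ⟫ ≥ δ`. A boundary point outside every cap `B(pᵢ, nᵢ, δ)` could be added
to the family, so its caps cover `∂Ω`. Order the family by the angle `θᵢ` of `nᵢ`. For
consecutive members `δ ≤ ⟪pᵢ₊₁ - pᵢ, nᵢ₊₁ - nᵢ⟫ ≤ ‖pᵢ₊₁ - pᵢ‖ (θᵢ₊₁ - θᵢ)`. The angle gaps add up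
to at most `2π`, and the chords `pᵢ₊₁ - pᵢ` of the inscribed convex polygon add up to `O(R)` when
`Ω` lies in the disc of radius `R`: summation by parts against the normals and the tangents. By
Cauchy–Schwarz the family has `O(√(R/δ))` members, so `N(Ω, δ) = O(δ^(-1/2))`.
-/

open Real Filter Topology

local notation "ℝ²" => EuclideanSpace ℝ (Fin 2)

lemma sum_inner_sub_le {F : Type*} [NormedAddCommGroup F] [InnerProductSpace ℝ F]
    {x v : ℕ → F} {θ : ℕ → ℝ} {m : ℕ} {R : ℝ} (hx : ∀ i ≤ m, ‖x i‖ ≤ R)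
    (hv : ∀ i, ‖v i‖ ≤ 1) (hvθ : ∀ i < m, ‖v (i + 1) - v i‖ ≤ θ (i + 1) - θ i) :
    ∑ i ∈ Finset.range m, ⟪x (i + 1) - x i, v i⟫ ≤ 2 * R + R * (θ m - θ 0) := by
  have hR : 0 ≤ R := (norm_nonneg _).trans (hx 0 (Nat.zero_le m))
  have hend : ∀ i ≤ m, |⟪x i, v i⟫| ≤ R := fun i hi =>
    (abs_real_inner_le_norm _ _).trans (by nlinarith [hx i hi, hv i, norm_nonneg (x i)])
  have hstep : ∀ i ∈ Finset.range m, ⟪x (i + 1) - x i, v i⟫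
      ≤ (⟪x (i + 1), v (i + 1)⟫ - ⟪x i, v i⟫) + R * (θ (i + 1) - θ i) := by
    intro i hi
    have hi : i < m := Finset.mem_range.mp hi
    have hcs : -⟪x (i + 1), v (i + 1) - v i⟫ ≤ ‖x (i + 1)‖ * ‖v (i + 1) - v i‖ :=
      (neg_le_abs _).trans (abs_real_inner_le_norm _ _)
    have hmul : ‖x (i + 1)‖ * ‖v (i + 1) - v i‖ ≤ R * (θ (i + 1) - θ i) :=
      mul_le_mul (hx _ hi) (hvθ i hi) (norm_nonneg _) hR
    simp only [inner_sub_left, inner_sub_right] at hcs ⊢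
    linarith
  calc ∑ i ∈ Finset.range m, ⟪x (i + 1) - x i, v i⟫
      ≤ ∑ i ∈ Finset.range m, ((⟪x (i + 1), v (i + 1)⟫ - ⟪x i, v i⟫) + R * (θ (i + 1) - θ i)) :=
        Finset.sum_le_sum hstep
    _ = (⟪x m, v m⟫ - ⟪x 0, v 0⟫) + R * (θ m - θ 0) := by
        rw [Finset.sum_add_distrib, ← Finset.mul_sum, Finset.sum_range_sub (fun i => ⟪x i, v i⟫),
          Finset.sum_range_sub θ]
    _ ≤ 2 * R + R * (θ m - θ 0) := by
        have := abs_le.mp (hend m le_rfl); have := abs_le.mp (hend 0 (Nat.zero_le m)); linarith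

lemma card_sq_mul_le_sum_mul_sum {ι : Type*} (s : Finset ι) {f g : ι → ℝ} {δ : ℝ} (hδ : 0 ≤ δ)
    (hf : ∀ i ∈ s, 0 ≤ f i) (hg : ∀ i ∈ s, 0 ≤ g i) (hfg : ∀ i ∈ s, δ ≤ f i * g i) :
    (s.card : ℝ) ^ 2 * δ ≤ (∑ i ∈ s, f i) * ∑ i ∈ s, g i := by
  have := Finset.sum_sq_le_sum_mul_sum_of_sq_le_mul s (r := fun _ => √δ) hf hg
    fun i hi => (sq_sqrt hδ).trans_le (hfg i hi)
  rwa [Finset.sum_const, nsmul_eq_mul, mul_pow, sq_sqrt hδ] at this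

lemma Finset.exists_mapsTo_strictMonoOn_comp {α β : Type*} [Nonempty α] [LinearOrder β]
    {s : Finset α} {f : α → β} (hf : InjOn f s) :
    ∃ q : ℕ → α, MapsTo q (Set.Iio s.card) s ∧ StrictMonoOn (f ∘ q) (Set.Iio s.card) := by
  classical
  set e := (s.image f).orderEmbOfFin (card_image_of_injOn hf)
  have hpre : ∀ i : Fin s.card, ∃ a ∈ s, f a = e i := fun i =>
    mem_image.mp ((s.image f).orderEmbOfFin_mem (card_image_of_injOn hf) i)
  choose q hqs hqe using hpre
  refine ⟨fun i => if h : i < s.card then q ⟨i, h⟩ else Classical.arbitrary α,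
    fun i hi => by simp [dif_pos (Set.mem_Iio.mp hi), hqs], fun i hi j hj hij => ?_⟩
  simp only [Function.comp_apply, dif_pos (Set.mem_Iio.mp hi), dif_pos (Set.mem_Iio.mp hj), hqe]
  exact e.strictMono (Fin.mk_lt_mk.mpr hij)

lemma limsup_log_div_log_inv_mem_Icc {N : ℝ → ℕ} {C a : ℝ} (hC : 1 ≤ C) (ha : 0 ≤ a)
    (hN : ∀ᶠ δ in 𝓝[>] 0, (N δ : ℝ) ≤ C * δ⁻¹ ^ a) :
    limsup (fun δ => log (N δ) / log δ⁻¹) (𝓝[>] 0) ∈ Icc 0 a := by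
  set f := fun δ : ℝ => log (N δ) / log δ⁻¹
  set g := fun δ : ℝ => a + log C / log δ⁻¹
  have hlog : ∀ᶠ δ in 𝓝[>] (0 : ℝ), 0 < log δ⁻¹ := by
    filter_upwards [Ioo_mem_nhdsGT one_pos] with δ hδ
    exact log_pos ((one_lt_inv₀ hδ.1).mpr hδ.2)
  have hf0 : ∀ᶠ δ in 𝓝[>] (0 : ℝ), 0 ≤ f δ := by
    filter_upwards [hlog] with δ hδ
    exact div_nonneg (log_natCast_nonneg _) hδ.le
  have hfg : ∀ᶠ δ in 𝓝[>] (0 : ℝ), f δ ≤ g δ := by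
    filter_upwards [hlog, hN, self_mem_nhdsWithin] with δ hL hNδ hδ
    have hpow : 0 < δ⁻¹ ^ a := rpow_pos_of_pos (inv_pos.mpr hδ) a
    have hlogN : log (N δ) ≤ log C + a * log δ⁻¹ := by
      rcases (N δ).eq_zero_or_pos with h0 | hpos
      · rw [h0, Nat.cast_zero, log_zero]
        linarith [log_nonneg hC, mul_nonneg ha hL.le]
      · rw [← log_rpow (inv_pos.mpr hδ), ← log_mul (by positivity) hpow.ne']
        exact log_le_log (by exact_mod_cast hpos) hNδ
    calc f δ ≤ (log C + a * log δ⁻¹) / log δ⁻¹ := div_le_div_of_nonneg_right hlogN hL.le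
      _ = g δ := by rw [add_div, mul_div_assoc, div_self hL.ne', mul_one, add_comm]
  have hg : Tendsto g (𝓝[>] 0) (𝓝 a) := by
    have h := tendsto_const_nhds (x := a) |>.add
      ((tendsto_log_atTop.comp tendsto_inv_nhdsGT_zero).const_div_atTop (log C))
    rw [add_zero] at h
    exact h
  have hfb : IsBoundedUnder (· ≤ ·) (𝓝[>] 0) f := hg.isBoundedUnder_le.mono_le hfg
  refine ⟨le_limsup_of_frequently_le hf0.frequently hfb, ?_⟩
  calc limsup f (𝓝[>] 0) ≤ limsup g (𝓝[>] 0) :=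
        limsup_le_limsup hfg (isBoundedUnder_of_eventually_ge hf0).isCoboundedUnder_le
          hg.isBoundedUnder_le
    _ = a := hg.limsup_eq

def dir (θ : ℝ) : ℝ² := !₂[cos θ, sin θ]

lemma inner_dir (u : ℝ²) (θ : ℝ) : ⟪u, dir θ⟫ = u 0 * cos θ + u 1 * sin θ := by
  simp [dir, PiLp.inner_apply, Fin.sum_univ_two, mul_comm]

lemma norm_sq_eq_sq_add_sq (u : ℝ²) : ‖u‖ ^ 2 = u 0 ^ 2 + u 1 ^ 2 := by
  simp [EuclideanSpace.norm_sq_eq, Fin.sum_univ_two]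

lemma dir_apply_zero (θ : ℝ) : dir θ 0 = cos θ := by simp [dir]

lemma dir_apply_one (θ : ℝ) : dir θ 1 = sin θ := by simp [dir]

lemma norm_dir (θ : ℝ) : ‖dir θ‖ = 1 := by
  simp [EuclideanSpace.norm_eq, dir, Fin.sum_univ_two]

lemma norm_dir_sub_dir_le (a b : ℝ) : ‖dir b - dir a‖ ≤ |b - a| := by
  rw [← sq_le_sq₀ (norm_nonneg _) (abs_nonneg _), sq_abs, norm_sq_eq_sq_add_sq]
  have hcos : 1 - (b - a) ^ 2 / 2 ≤ cos (b - a) := one_sub_sq_div_two_le_cos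
  simp only [PiLp.sub_apply, dir_apply_zero, dir_apply_one]
  rw [cos_sub] at hcos
  nlinarith [sin_sq_add_cos_sq a, sin_sq_add_cos_sq b]

lemma norm_sq_eq_inner_dir_sq_add (u : ℝ²) (θ : ℝ) :
    ‖u‖ ^ 2 = ⟪u, dir θ⟫ ^ 2 + ⟪u, dir (θ + π / 2)⟫ ^ 2 := by
  simp only [norm_sq_eq_sq_add_sq, inner_dir, cos_add_pi_div_two, sin_add_pi_div_two]
  linear_combination (u 0 ^ 2 + u 1 ^ 2) * (sin_sq_add_cos_sq θ).symm

lemma inner_dir_add_pi_div_two_nonneg {u : ℝ²} {a b : ℝ} (hab : a < b) (hba : b ≤ a + π / 2)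
    (ha : ⟪u, dir a⟫ ≤ 0) (hb : 0 ≤ ⟪u, dir b⟫) : 0 ≤ ⟪u, dir (a + π / 2)⟫ := by
  rw [inner_dir] at *
  rw [cos_add_pi_div_two, sin_add_pi_div_two]
  have key : sin (b - a) * (-(u 0 * sin a) + u 1 * cos a)
      = (u 0 * cos b + u 1 * sin b) - cos (b - a) * (u 0 * cos a + u 1 * sin a) := by
    rw [sin_sub, cos_sub]
    linear_combination (u 0 * cos b + u 1 * sin b) * sin_sq_add_cos_sq a
  have hsin : 0 < sin (b - a) := sin_pos_of_pos_of_lt_pi (by linarith) (by linarith [pi_pos])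
  have hcos : 0 ≤ cos (b - a) := cos_nonneg_of_mem_Icc ⟨by linarith [pi_pos], by linarith⟩
  nlinarith

def normalAngle (n : ℝ²) : ℝ := Complex.arg ⟨n 0, n 1⟩

lemma normalAngle_mem_Ioc (n : ℝ²) : normalAngle n ∈ Ioc (-π) π :=
  ⟨Complex.neg_pi_lt_arg _, Complex.arg_le_pi _⟩

lemma dir_normalAngle {n : ℝ²} (hn : ‖n‖ = 1) : dir (normalAngle n) = n := by
  have hz : ‖(⟨n 0, n 1⟩ : ℂ)‖ = 1 := by
    rw [Complex.norm_def, Complex.normSq_apply, ← hn, EuclideanSpace.norm_eq, Fin.sum_univ_two]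
    simp [sq]
  have hz0 : (⟨n 0, n 1⟩ : ℂ) ≠ 0 := norm_ne_zero_iff.mp (hz ▸ one_ne_zero)
  ext i
  fin_cases i
  · simp [dir_apply_zero, normalAngle, Complex.cos_arg hz0, hz]
  · simp [dir_apply_one, normalAngle, Complex.sin_arg, hz]

lemma norm_le_of_inner_dir {u : ℝ²} {a b R : ℝ} (hab : a < b) (hu : ‖u‖ ≤ 2 * R)
    (ha : ⟪u, dir a⟫ ≤ 0) (hb : 0 ≤ ⟪u, dir b⟫) :
    ‖u‖ ≤ -⟪u, dir a⟫ + ⟪u, dir (a + π / 2)⟫ + 4 * R * (b - a) := by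
  have hR : 0 ≤ R := by linarith [norm_nonneg u]
  -- A gap of at most `π/2` puts `u` in the quadrant spanned by `-dir a` and `dir (a + π/2)`;
  -- a larger gap is paid for by the last term alone.
  rcases le_or_gt b (a + π / 2) with hba | hba
  · have hQ := inner_dir_add_pi_div_two_nonneg hab hba ha hb
    have hsq := norm_sq_eq_inner_dir_sq_add u a
    nlinarith [norm_nonneg u, mul_nonneg hR (sub_nonneg.mpr hab.le)]
  · have hQ : -‖u‖ ≤ ⟪u, dir (a + π / 2)⟫ := by
      have := abs_real_inner_le_norm u (dir (a + π / 2))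
      rw [norm_dir, mul_one] at this
      exact (abs_le.mp this).1
    nlinarith [pi_gt_three]

section Chain

variable {x : ℕ → ℝ²} {θ : ℕ → ℝ} {m : ℕ} {R δ : ℝ}

lemma sum_norm_sub_le (hx : ∀ i ≤ m, ‖x i‖ ≤ R) (hθ : ∀ i < m, θ i < θ (i + 1))
    (hsupp : ∀ i < m, ⟪x (i + 1) - x i, dir (θ i)⟫ ≤ 0 ∧ 0 ≤ ⟪x (i + 1) - x i, dir (θ (i + 1))⟫) :
    ∑ i ∈ Finset.range m, ‖x (i + 1) - x i‖ ≤ 4 * R + 6 * R * (θ m - θ 0) := by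
  have hdir : ∀ c : ℝ, ∀ i < m, ‖dir (θ (i + 1) + c) - dir (θ i + c)‖ ≤ θ (i + 1) - θ i := by
    intro c i hi
    have := norm_dir_sub_dir_le (θ i + c) (θ (i + 1) + c)
    rwa [add_sub_add_right_eq_sub, abs_of_pos (sub_pos.mpr (hθ i hi))] at this
  have hnormal : ∑ i ∈ Finset.range m, ⟪x (i + 1) - x i, -dir (θ i)⟫ ≤ 2 * R + R * (θ m - θ 0) :=
    sum_inner_sub_le hx (fun i => by rw [norm_neg, norm_dir])
      fun i hi => by
        rw [neg_sub_neg, norm_sub_rev]; simpa only [add_zero] using hdir 0 i hi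
  have htangent :
      ∑ i ∈ Finset.range m, ⟪x (i + 1) - x i, dir (θ i + π / 2)⟫ ≤ 2 * R + R * (θ m - θ 0) :=
    sum_inner_sub_le hx (fun i => (norm_dir _).le) (hdir (π / 2))
  have hterm : ∀ i ∈ Finset.range m, ‖x (i + 1) - x i‖ ≤ ⟪x (i + 1) - x i, -dir (θ i)⟫
      + ⟪x (i + 1) - x i, dir (θ i + π / 2)⟫ + 4 * R * (θ (i + 1) - θ i) := by
    intro i hi
    have hi : i < m := Finset.mem_range.mp hi
    rw [inner_neg_right]
    exact norm_le_of_inner_dir (hθ i hi)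
      ((norm_sub_le _ _).trans (by linarith [hx _ hi, hx i hi.le])) (hsupp i hi).1 (hsupp i hi).2
  calc ∑ i ∈ Finset.range m, ‖x (i + 1) - x i‖
      ≤ ∑ i ∈ Finset.range m, (⟪x (i + 1) - x i, -dir (θ i)⟫
          + ⟪x (i + 1) - x i, dir (θ i + π / 2)⟫ + 4 * R * (θ (i + 1) - θ i)) :=
        Finset.sum_le_sum hterm
    _ = ∑ i ∈ Finset.range m, ⟪x (i + 1) - x i, -dir (θ i)⟫
          + ∑ i ∈ Finset.range m, ⟪x (i + 1) - x i, dir (θ i + π / 2)⟫ + 4 * R * (θ m - θ 0) := by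
        rw [Finset.sum_add_distrib, Finset.sum_add_distrib, ← Finset.mul_sum,
          Finset.sum_range_sub θ]
    _ ≤ 4 * R + 6 * R * (θ m - θ 0) := by linarith

lemma natCast_le_of_chain (hδ : 0 < δ) (hx : ∀ i ≤ m, ‖x i‖ ≤ R)
    (hθ : ∀ i < m, θ i < θ (i + 1)) (hθm : θ m - θ 0 ≤ 2 * π)
    (hsupp : ∀ i < m, ⟪x (i + 1) - x i, dir (θ i)⟫ ≤ 0 ∧ 0 ≤ ⟪x (i + 1) - x i, dir (θ (i + 1))⟫)
    (hsep : ∀ i < m, δ ≤ ⟪x (i + 1) - x i, dir (θ (i + 1)) - dir (θ i)⟫) :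
    (m : ℝ) ≤ 17 * √(R / δ) := by
  have hR : 0 ≤ R := (norm_nonneg _).trans (hx 0 (Nat.zero_le m))
  have hgap : ∀ i ∈ Finset.range m, 0 ≤ θ (i + 1) - θ i := fun i hi =>
    (sub_pos.mpr (hθ i (Finset.mem_range.mp hi))).le
  have hprod : ∀ i ∈ Finset.range m, δ ≤ ‖x (i + 1) - x i‖ * (θ (i + 1) - θ i) := by
    intro i hi
    have hi : i < m := Finset.mem_range.mp hi
    have harc := norm_dir_sub_dir_le (θ i) (θ (i + 1))
    rw [abs_of_pos (sub_pos.mpr (hθ i hi))] at harc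
    calc δ ≤ ⟪x (i + 1) - x i, dir (θ (i + 1)) - dir (θ i)⟫ := hsep i hi
      _ ≤ ‖x (i + 1) - x i‖ * ‖dir (θ (i + 1)) - dir (θ i)‖ := real_inner_le_norm _ _
      _ ≤ ‖x (i + 1) - x i‖ * (θ (i + 1) - θ i) := by gcongr
  have hcs :=
    card_sq_mul_le_sum_mul_sum (Finset.range m) hδ.le (fun i _ => norm_nonneg _) hgap hprod
  have hθ0 := Finset.sum_nonneg hgap
  rw [Finset.sum_range_sub θ] at hcs hθ0
  rw [Finset.card_range] at hcs
  have hsq : (m : ℝ) ^ 2 ≤ 17 ^ 2 * (R / δ) := by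
    rw [mul_div_assoc', le_div_iff₀ hδ]
    calc (m : ℝ) ^ 2 * δ
        ≤ (4 * R + 6 * R * (θ m - θ 0)) * (θ m - θ 0) :=
          hcs.trans (by gcongr; exact sum_norm_sub_le hx hθ hsupp)
      _ ≤ (4 * R + 6 * R * (2 * π)) * (2 * π) := by gcongr
      _ = (4 + 12 * π) * (2 * π) * R := by ring
      _ ≤ 17 ^ 2 * R := by
          have : (4 + 12 * π) * (2 * π) ≤ 17 ^ 2 := by nlinarith [pi_lt_d2, pi_pos]
          gcongr
  calc (m : ℝ) = √((m : ℝ) ^ 2) := (sqrt_sq m.cast_nonneg).symm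
    _ ≤ √(17 ^ 2 * (R / δ)) := sqrt_le_sqrt hsq
    _ = 17 * √(R / δ) := by rw [sqrt_mul (by norm_num), sqrt_sq (by norm_num)]

end Chain

namespace IsSupportingNormal

variable {Ω : Set ℝ²} {p n : ℝ²}

lemma inner_sub_nonpos (h : IsSupportingNormal Ω p n) {y : ℝ²} (hy : y ∈ closure Ω) :
    ⟪y - p, n⟫ ≤ 0 := by
  have hle : ⟪y, n⟫ ≤ ⟪p, n⟫ := closure_minimal (t := {z | ⟪z, n⟫ ≤ ⟪p, n⟫}) h.2.2
    (isClosed_le (by fun_prop) continuous_const) hy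
  rw [inner_sub_left]
  linarith

end IsSupportingNormal

lemma exists_isSupportingNormal {Ω : Set ℝ²} (ho : IsOpen Ω) (hc : Convex ℝ Ω) {p : ℝ²}
    (hp : p ∈ frontier Ω) : ∃ n, IsSupportingNormal Ω p n := by
  obtain ⟨f, hf⟩ := geometric_hahn_banach_open_point hc ho (ho.frontier_eq ▸ hp).2
  set v := (InnerProductSpace.toDual ℝ ℝ²).symm f
  have hfv : ∀ z, f z = ⟪z, v⟫ := fun z => by
    rw [real_inner_comm]; exact InnerProductSpace.toDual_symm_apply.symm
  obtain ⟨y, hy⟩ := (nonempty_of_mem hp).mono frontier_subset_closure |>.of_closure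
  have hv : v ≠ 0 := by
    rintro hv
    have := hf y hy
    rw [hfv, hfv, hv, inner_zero_right, inner_zero_right] at this
    exact lt_irrefl 0 this
  refine ⟨‖v‖⁻¹ • v, hp, by simp [norm_smul, hv], fun z hz => ?_⟩
  simp only [real_inner_smul_right, ← hfv]
  exact mul_le_mul_of_nonneg_left (hf z hz).le (by positivity)

-- `⟪p - p', n - n'⟫` is the distance from `p'` to the supporting line at `p` plus the distance
-- from `p` to the one at `p'`.
def IsCapPacking (Ω : Set ℝ²) (δ : ℝ) (s : Finset (ℝ² × ℝ²)) : Prop :=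
  (∀ q ∈ s, IsSupportingNormal Ω q.1 q.2) ∧
    (s : Set (ℝ² × ℝ²)).Pairwise fun q q' => δ ≤ ⟪q.1 - q'.1, q.2 - q'.2⟫

namespace IsCapPacking

variable {Ω : Set ℝ²} {δ : ℝ} {s : Finset (ℝ² × ℝ²)}

lemma empty : IsCapPacking Ω δ ∅ := ⟨by simp, by simp⟩

lemma insert (hs : IsCapPacking Ω δ s) {y ny : ℝ²} (hy : IsSupportingNormal Ω y ny)
    (hout : ∀ q ∈ s, y ∉ bdryCap Ω q.1 q.2 δ) : IsCapPacking Ω δ (insert (y, ny) s) := by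
  have hsep : ∀ q ∈ s, δ ≤ ⟪y - q.1, ny - q.2⟫ := by
    intro q hq
    have hq_y : ⟪y - q.1, q.2⟫ ≤ -δ := by
      have hfar : δ ≤ |⟪y - q.1, q.2⟫| := not_lt.mp fun h => hout q hq ⟨hy.1, h⟩
      have := (hs.1 q hq).inner_sub_nonpos (frontier_subset_closure hy.1)
      rw [abs_of_nonpos this] at hfar
      linarith
    have hy_q : 0 ≤ ⟪y - q.1, ny⟫ := by
      have := hy.inner_sub_nonpos (frontier_subset_closure (hs.1 q hq).1)
      rw [← neg_sub, inner_neg_left] at this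
      linarith
    rw [inner_sub_right]
    linarith
  refine ⟨?_, ?_⟩
  · simpa only [Finset.mem_insert, forall_eq_or_imp] using ⟨hy, hs.1⟩
  · rw [Finset.coe_insert]
    refine hs.2.insert fun q hq _ => ⟨hsep q hq, ?_⟩
    rw [← neg_sub, ← neg_sub ny, inner_neg_neg]
    exact hsep q hq

lemma injOn_normalAngle (hs : IsCapPacking Ω δ s) (hδ : 0 < δ) :
    InjOn (fun q : ℝ² × ℝ² => normalAngle q.2) s := by
  intro q hq q' hq' heq
  by_contra hne
  have hn : q.2 = q'.2 := by
    rw [← dir_normalAngle (hs.1 q hq).2.1, ← dir_normalAngle (hs.1 q' hq').2.1]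
    exact congrArg dir heq
  have : δ ≤ ⟪q.1 - q'.1, q.2 - q'.2⟫ := hs.2 hq hq' hne
  rw [hn, sub_self, inner_zero_right] at this
  linarith

lemma card_le (hs : IsCapPacking Ω δ s) (hδ : 0 < δ) {R : ℝ}
    (hΩ : closure Ω ⊆ Metric.closedBall 0 R) : (s.card : ℝ) ≤ 1 + 17 * √(R / δ) := by
  obtain ⟨q, hqs, hθ⟩ := s.exists_mapsTo_strictMonoOn_comp (hs.injOn_normalAngle hδ)
  set θ : ℕ → ℝ := fun i => normalAngle (q i).2
  have hq : ∀ i < s.card, IsSupportingNormal Ω (q i).1 (q i).2 := fun i hi => hs.1 _ (hqs hi)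
  have hqdir : ∀ i < s.card, (q i).2 = dir (θ i) := fun i hi =>
    (dir_normalAngle (hq i hi).2.1).symm
  have hstep : ∀ i, i + 1 < s.card → θ i < θ (i + 1) := fun i hi =>
    hθ (mem_Iio.mpr (by omega)) (mem_Iio.mpr hi) (lt_add_one i)
  obtain hk | hk := eq_or_ne s.card 0
  · rw [hk, Nat.cast_zero]
    positivity
  obtain ⟨m, hm⟩ := Nat.exists_eq_add_one_of_ne_zero hk
  rw [hm] at hq hqdir hstep hqs ⊢
  have hcl : ∀ i < m + 1, (q i).1 ∈ closure Ω := fun i hi =>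
    frontier_subset_closure (hq i hi).1
  have hx : ∀ i ≤ m, ‖(q i).1‖ ≤ R := fun i hi => by simpa using hΩ (hcl i (by omega))
  have hsupp : ∀ i < m, ⟪(q (i + 1)).1 - (q i).1, dir (θ i)⟫ ≤ 0 ∧
      0 ≤ ⟪(q (i + 1)).1 - (q i).1, dir (θ (i + 1))⟫ := fun i hi => by
    rw [← hqdir i (by omega), ← hqdir (i + 1) (by omega)]
    have h₁ := (hq i (by omega)).inner_sub_nonpos (hcl (i + 1) (by omega))
    have h₂ := (hq (i + 1) (by omega)).inner_sub_nonpos (hcl i (by omega))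
    rw [← neg_sub, inner_neg_left] at h₂
    exact ⟨h₁, by linarith⟩
  have hsep : ∀ i < m, δ ≤ ⟪(q (i + 1)).1 - (q i).1, dir (θ (i + 1)) - dir (θ i)⟫ := by
    intro i hi
    have hne : q (i + 1) ≠ q i := fun h => (hstep i (by omega)).ne' (by simp only [θ, h])
    rw [← hqdir i (by omega), ← hqdir (i + 1) (by omega)]
    exact hs.2 (hqs (mem_Iio.mpr (by omega))) (hqs (mem_Iio.mpr (by omega))) hne
  have hθm : θ m - θ 0 ≤ 2 * π := by
    linarith [(normalAngle_mem_Ioc (q 0).2).1, (normalAngle_mem_Ioc (q m).2).2]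
  have := natCast_le_of_chain hδ hx (fun i hi => hstep i (by omega)) hθm hsupp hsep
  push_cast
  linarith

end IsCapPacking

lemma capCoverNumber_le_of_forall_isCapPacking {Ω : Set ℝ²} (ho : IsOpen Ω) (hc : Convex ℝ Ω)
    {δ : ℝ} (hδ : 0 < δ) {K : ℕ} (hK : ∀ s, IsCapPacking Ω δ s → s.card ≤ K) :
    capCoverNumber Ω δ ≤ K := by
  classical
  set P : ℕ → Prop := fun c => ∃ s, IsCapPacking Ω δ s ∧ s.card = c
  obtain ⟨s, hs, hsc⟩ : P (Nat.findGreatest P K) :=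
    Nat.findGreatest_spec (Nat.zero_le K) (show P 0 from ⟨∅, .empty, rfl⟩)
  have hcover : frontier Ω ⊆ ⋃ q ∈ s, bdryCap Ω q.1 q.2 δ := by
    intro y hy
    by_contra hyc
    simp only [mem_iUnion, exists_prop, not_exists, not_and] at hyc
    obtain ⟨ny, hny⟩ := exists_isSupportingNormal ho hc hy
    have hnew : (y, ny) ∉ s := fun h =>
      hyc _ h (show y ∈ bdryCap Ω y ny δ from ⟨hy, by simpa using hδ⟩)
    have hle := Nat.le_findGreatest (hK _ (hs.insert hny hyc))
      (show P _ from ⟨_, hs.insert hny hyc, rfl⟩)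
    rw [Finset.card_insert_of_notMem hnew, ← hsc] at hle
    omega
  calc capCoverNumber Ω δ ≤ s.card := Nat.sInf_le ⟨s, rfl, hs.1, hcover⟩
    _ ≤ K := hsc ▸ Nat.findGreatest_le K

lemma capCoverNumber_le {Ω : Set ℝ²} (ho : IsOpen Ω) (hc : Convex ℝ Ω) {δ R : ℝ} (hδ : 0 < δ)
    (hΩ : closure Ω ⊆ Metric.closedBall 0 R) :
    (capCoverNumber Ω δ : ℝ) ≤ 1 + 17 * √(R / δ) := by
  have hK := capCoverNumber_le_of_forall_isCapPacking ho hc hδ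
    fun s hs => Nat.le_floor (hs.card_le hδ hΩ)
  exact (Nat.cast_le.mpr hK).trans (Nat.floor_le (by positivity))

theorem stmt_9_general (Ω : Set (EuclideanSpace ℝ (Fin 2)))
    (hb : Bornology.IsBounded Ω) (ho : IsOpen Ω) (hc : Convex ℝ Ω) :
    0 ≤ kappa Ω ∧ kappa Ω ≤ 1 / 2 := by
  obtain ⟨r, hr⟩ := hb.closure.subset_closedBall 0
  set R := max r 1
  have hΩ : closure Ω ⊆ Metric.closedBall 0 R :=
    hr.trans (Metric.closedBall_subset_closedBall (le_max_left r 1))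
  have hR : 1 ≤ √R := one_le_sqrt.mpr (le_max_right r 1)
  refine limsup_log_div_log_inv_mem_Icc (C := 18 * √R) (by linarith) one_half_pos.le ?_
  filter_upwards [Ioo_mem_nhdsGT one_pos] with δ ⟨hδ, hδ1⟩
  have hδ' : 1 ≤ δ⁻¹ ^ (1 / 2 : ℝ) := one_le_rpow (one_le_inv₀ hδ |>.mpr hδ1.le) one_half_pos.le
  calc (capCoverNumber Ω δ : ℝ) ≤ 1 + 17 * √(R / δ) := capCoverNumber_le ho hc hδ hΩ
    _ = 1 + 17 * (√R * δ⁻¹ ^ (1 / 2 : ℝ)) := by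
        rw [div_eq_mul_inv, sqrt_mul (by positivity), sqrt_eq_rpow δ⁻¹]
    _ ≤ 18 * √R * δ⁻¹ ^ (1 / 2 : ℝ) := by nlinarith

/-- For every bounded open convex `Ω ⊂ ℝ²` containing `0`, `0 ≤ κ_Ω ≤ 1/2`. -/
theorem stmt_9 (Ω : Set (EuclideanSpace ℝ (Fin 2)))
    (hb : Bornology.IsBounded Ω) (ho : IsOpen Ω) (hc : Convex ℝ Ω)
    (h0 : (0 : EuclideanSpace ℝ (Fin 2)) ∈ Ω) :
    0 ≤ kappa Ω ∧ kappa Ω ≤ 1 / 2 :=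
  stmt_9_general Ω hb ho hc
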